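/- arXiv:2010.05957 — 2 statements merged into one kernel-verified Lean document; each statement's English description precedes it below -/
import Mathlib

section
/- Let ω : ℝ → ℝ³ be smooth and let Ω(t) = ⌊ω(t)⌋² + ⌊ω'(t)⌋. Suppose i ≥ 2 is the smallest index such that ω⁽ⁱ⁾(0) ≠ 0 (so ω⁽ᵏ⁾(0) = 0 for 0 ≤ k ≤ i−1), and j > i is the smallest index greater than i such that ω⁽ʲ⁾(0) is not parallel to ω⁽ⁱ⁾(0). Then the 6×3 matrix Θ obtained by stacking Ω⁽ⁱ⁻¹⁾(0) on top of Ω⁽ʲ⁻¹⁾(0) has full column rank 3. -/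
open Matrix Finset

/-- Skew-symmetric (cross-product) matrix of a vector in ℝ³. -/
def hat (a : Fin 3 → ℝ) : Matrix (Fin 3) (Fin 3) ℝ :=
  !![0, -a 2, a 1; a 2, 0, -a 0; -a 1, a 0, 0]

/-- Entrywise `m`-th derivative of a matrix-valued function of time. -/
noncomputable def matIterDeriv (m : ℕ) (M : ℝ → Matrix (Fin 3) (Fin 3) ℝ) (t : ℝ) :
    Matrix (Fin 3) (Fin 3) ℝ :=
  Matrix.of fun i j => iteratedDeriv m (fun s => M s i j) t

/-- `Ω(t) = ⌊ω(t)⌋² + ⌊ω'(t)⌋`. -/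
noncomputable def bigOmega (ω : ℝ → Fin 3 → ℝ) (t : ℝ) : Matrix (Fin 3) (Fin 3) ℝ :=
  hat (ω t) * hat (ω t) + hat (deriv ω t)

local notation "S∞" => ((⊤:ℕ∞) : WithTop ℕ∞)

private lemma cd_nat {F : Type*} [NormedAddCommGroup F] [NormedSpace ℝ F]
    {f : ℝ → F} (hf : ContDiff ℝ S∞ f) (n : ℕ) : ContDiff ℝ (n : WithTop ℕ∞) f :=
  hf.of_le (by exact_mod_cast le_top)

private lemma itd_add {f g : ℝ → ℝ} (hf : ContDiff ℝ S∞ f) (hg : ContDiff ℝ S∞ g)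
    (n : ℕ) (x : ℝ) :
    iteratedDeriv n (fun s => f s + g s) x = iteratedDeriv n f x + iteratedDeriv n g x := by
  have h := iteratedDerivWithin_add (Set.mem_univ x) uniqueDiffOn_univ
    ((cd_nat hf n).contDiffWithinAt (s := Set.univ)) ((cd_nat hg n).contDiffWithinAt (s := Set.univ))
  simp only [iteratedDerivWithin_univ] at h; exact h

private lemma pascal_sum (F G : ℕ → ℝ) (n : ℕ) :
    ∑ k ∈ range (n+1), (n.choose k : ℝ) * (F (k+1) * G (n-k))
      + ∑ k ∈ range (n+1), (n.choose k : ℝ) * (F k * G (n+1-k))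
    = ∑ k ∈ range (n+2), ((n+1).choose k : ℝ) * (F k * G (n+1-k)) := by
  rw [Finset.sum_range_succ' (fun k => ((n+1).choose k : ℝ) * (F k * G (n+1-k))) (n+1)]
  have e3 : ∀ k ∈ Finset.range (n + 1),
      (((n+1).choose (k+1) : ℝ)) * (F (k+1) * G (n + 1 - (k+1)))
      = (n.choose k : ℝ) * (F (k+1) * G (n-k)) + (n.choose (k+1) : ℝ) * (F (k+1) * G (n-k)) := by
    intro k _
    have h : n + 1 - (k+1) = n - k := by omega
    rw [h, Nat.choose_succ_succ]
    push_cast; ring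
  rw [Finset.sum_congr rfl e3, Finset.sum_add_distrib]
  have e4 : ∑ k ∈ Finset.range (n+1), (n.choose (k+1) : ℝ) * (F (k+1) * G (n-k))
      = ∑ k ∈ Finset.range n, (n.choose (k+1) : ℝ) * (F (k+1) * G (n-k)) := by
    rw [Finset.sum_range_succ, Nat.choose_succ_self]; simp
  have e5 : ∑ k ∈ Finset.range (n+1), (n.choose k : ℝ) * (F k * G (n+1-k))
      = ∑ k ∈ Finset.range n, (n.choose (k+1) : ℝ) * (F (k+1) * G (n-k)) + F 0 * G (n+1) := by
    rw [Finset.sum_range_succ' (fun k => (n.choose k : ℝ) * (F k * G (n+1-k))) n]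
    simp only [Nat.choose_zero_right, Nat.cast_one, one_mul, Nat.sub_zero]
    congr 1
    refine Finset.sum_congr rfl fun k hk => ?_
    have h : n + 1 - (k+1) = n - k := by omega
    rw [h]
  rw [e4, e5]
  simp only [Nat.choose_zero_right, Nat.cast_one, one_mul, Nat.sub_zero, Nat.add_sub_cancel_left]
  ring

private lemma itd_mul {f g : ℝ → ℝ} (hf : ContDiff ℝ S∞ f) (hg : ContDiff ℝ S∞ g)
    (n : ℕ) (x : ℝ) :
    iteratedDeriv n (fun s => f s * g s) x =
      ∑ k ∈ Finset.range (n + 1),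
        (n.choose k : ℝ) * (iteratedDeriv k f x * iteratedDeriv (n - k) g x) := by
  induction n generalizing x with
  | zero => simp
  | succ n ih =>
    have hdf : ∀ k, Differentiable ℝ (iteratedDeriv k f) := fun k =>
      hf.differentiable_iteratedDeriv k (by exact_mod_cast WithTop.coe_lt_top _)
    have hdg : ∀ k, Differentiable ℝ (iteratedDeriv k g) := fun k =>
      hg.differentiable_iteratedDeriv k (by exact_mod_cast WithTop.coe_lt_top _)
    rw [iteratedDeriv_succ]
    have e1 : iteratedDeriv n (fun s => f s * g s)
        = fun y => ∑ k ∈ Finset.range (n + 1),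
          (n.choose k : ℝ) * (iteratedDeriv k f y * iteratedDeriv (n - k) g y) :=
      funext fun y => ih y
    rw [e1, deriv_fun_sum (A := fun k y => (n.choose k : ℝ) *
      (iteratedDeriv k f y * iteratedDeriv (n - k) g y)) (fun k _ => (((hdf k).differentiableAt.mul
      (hdg (n - k)).differentiableAt).const_mul _))]
    have e2 : ∀ k ∈ Finset.range (n + 1),
        deriv (fun y => (n.choose k : ℝ) *
            (iteratedDeriv k f y * iteratedDeriv (n - k) g y)) x
        = (n.choose k : ℝ) * (iteratedDeriv (k+1) f x * iteratedDeriv (n - k) g x)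
          + (n.choose k : ℝ) * (iteratedDeriv k f x * iteratedDeriv (n - k + 1) g x) := by
      intro k _
      rw [deriv_const_mul (d := fun y => iteratedDeriv k f y * iteratedDeriv (n - k) g y) _ ((hdf k).differentiableAt.mul (hdg (n - k)).differentiableAt),
        deriv_fun_mul (hdf k).differentiableAt (hdg (n - k)).differentiableAt,
        ← iteratedDeriv_succ, ← iteratedDeriv_succ]
      ring
    rw [Finset.sum_congr rfl e2, Finset.sum_add_distrib]
    have hsub : ∀ k ∈ Finset.range (n + 1),
        (n.choose k : ℝ) * (iteratedDeriv k f x * iteratedDeriv (n - k + 1) g x)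
        = (n.choose k : ℝ) * (iteratedDeriv k f x * iteratedDeriv (n + 1 - k) g x) := by
      intro k hk
      have : n - k + 1 = n + 1 - k := by
        have := Finset.mem_range.mp hk; omega
      rw [this]
    rw [Finset.sum_congr rfl hsub]
    exact pascal_sum (fun k => iteratedDeriv k f x) (fun k => iteratedDeriv k g x) n

private lemma hat_zero : hat 0 = 0 := by
  ext p q; fin_cases p <;> fin_cases q <;> simp [hat, vecHead, vecTail]

private lemma hat_smul (c : ℝ) (a : Fin 3 → ℝ) : hat (c • a) = c • hat a := by
  ext p q; fin_cases p <;> fin_cases q <;> simp [hat, vecHead, vecTail]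

private lemma hat_contDiff {ω : ℝ → Fin 3 → ℝ} (hω : ContDiff ℝ S∞ ω) (p q : Fin 3) :
    ContDiff ℝ S∞ (fun s => hat (ω s) p q) := by
  fin_cases p <;> fin_cases q <;> simp [hat] <;>
    first
      | exact contDiff_const
      | exact contDiff_pi.mp hω _
      | exact (contDiff_pi.mp hω _).neg

private lemma itd_zero_fun (n : ℕ) : iteratedDeriv n (fun _ : ℝ => (0:ℝ)) = fun _ => 0 := by
  induction n with
  | zero => simp [iteratedDeriv_zero]
  | succ n ih => rw [iteratedDeriv_succ, ih]; funext s; simp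

private lemma itd_apply {ω : ℝ → Fin 3 → ℝ} (hω : ContDiff ℝ S∞ ω) (n : ℕ) (p : Fin 3)
    (t : ℝ) : iteratedDeriv n (fun s => ω s p) t = iteratedDeriv n ω t p := by
  induction n generalizing t with
  | zero => simp
  | succ n ih =>
    rw [iteratedDeriv_succ, iteratedDeriv_succ]
    have e : (fun s => iteratedDeriv n ω s p) = iteratedDeriv n (fun s => ω s p) :=
      funext fun s => (ih s).symm
    have hd : HasDerivAt (iteratedDeriv n ω) (deriv (iteratedDeriv n ω) t) t :=
      ((hω.differentiable_iteratedDeriv n (by exact_mod_cast WithTop.coe_lt_top _))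
        t).hasDerivAt
    rw [← (hasDerivAt_pi.mp hd p).deriv, ← e]

private lemma itd_hat {ω : ℝ → Fin 3 → ℝ} (hω : ContDiff ℝ S∞ ω) (n : ℕ) (p q : Fin 3)
    (t : ℝ) :
    iteratedDeriv n (fun s => hat (ω s) p q) t = hat (iteratedDeriv n ω t) p q := by
  fin_cases p <;> fin_cases q <;>
    simp [hat, iteratedDeriv_neg, itd_apply hω, itd_zero_fun, vecHead, vecTail]

private lemma matITD_bigOmega {ω : ℝ → Fin 3 → ℝ} (hω : ContDiff ℝ S∞ ω) (m : ℕ) (t : ℝ) :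
    matIterDeriv m (bigOmega ω) t =
      (∑ k ∈ Finset.range (m+1), (m.choose k : ℝ) •
        (hat (iteratedDeriv k ω t) * hat (iteratedDeriv (m-k) ω t)))
      + hat (iteratedDeriv (m+1) ω t) := by
  have hd : ContDiff ℝ S∞ (deriv ω) := (contDiff_infty_iff_deriv.mp hω).2
  ext p q
  have hP : ∀ r, ContDiff ℝ S∞ (fun s => hat (ω s) p r * hat (ω s) r q) := fun r =>
    (hat_contDiff hω p r).mul (hat_contDiff hω r q)
  have hfun : (fun s => bigOmega ω s p q) = fun s =>
      (hat (ω s) p 0 * hat (ω s) 0 q + hat (ω s) p 1 * hat (ω s) 1 q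
        + hat (ω s) p 2 * hat (ω s) 2 q) + hat (deriv ω s) p q := by
    funext s
    simp [bigOmega, Matrix.mul_apply, Fin.sum_univ_three]
  have E1 := itd_add (((hP 0).add (hP 1)).add (hP 2)) (hat_contDiff hd p q) m t
  have E2 := itd_add ((hP 0).add (hP 1)) (hP 2) m t
  have E3 := itd_add (hP 0) (hP 1) m t
  have M : ∀ r : Fin 3, iteratedDeriv m (fun s => hat (ω s) p r * hat (ω s) r q) t
      = ∑ k ∈ Finset.range (m+1), (m.choose k : ℝ) *
          (hat (iteratedDeriv k ω t) p r * hat (iteratedDeriv (m-k) ω t) r q) := by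
    intro r
    rw [itd_mul (hat_contDiff hω p r) (hat_contDiff hω r q)]
    refine Finset.sum_congr rfl fun k _ => ?_
    rw [itd_hat hω, itd_hat hω]
  have hDentry : iteratedDeriv m (fun s => hat (deriv ω s) p q) t
      = hat (iteratedDeriv (m+1) ω t) p q := by
    rw [itd_hat hd, ← iteratedDeriv_succ']
  show iteratedDeriv m (fun s => bigOmega ω s p q) t = _
  rw [hfun]
  simp only [E1, E2, E3, M, hDentry]
  simp only [Matrix.add_apply, Matrix.sum_apply, Matrix.smul_apply, Matrix.mul_apply,
    Fin.sum_univ_three, smul_eq_mul, mul_add, Finset.sum_add_distrib]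

private lemma hat_mulVec (a x : Fin 3 → ℝ) : hat a *ᵥ x = a ⨯₃ x := by
  funext p
  fin_cases p <;>
    simp [hat, mulVec, dotProduct, cross_apply, Fin.sum_univ_three, vecHead, vecTail] <;> ring

private lemma cross_zero_imp (a x : Fin 3 → ℝ) (ha : a ≠ 0) (h : a ⨯₃ x = 0) :
    ∃ c : ℝ, x = c • a := by
  by_cases hx : x = 0
  · exact ⟨0, by simp [hx]⟩
  have h2 : x ⨯₃ a = 0 := by rw [← cross_anticomm, h, neg_zero]
  have h3 : ¬ LinearIndependent ℝ ![x, a] := by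
    intro hli
    exact (crossProduct_ne_zero_iff_linearIndependent.mpr hli) h2
  rw [linearIndependent_fin2] at h3
  push_neg at h3
  simp only [Matrix.cons_val_one, Matrix.head_cons, Matrix.cons_val_zero] at h3
  obtain ⟨c, hc⟩ := h3 ha
  exact ⟨c, hc.symm⟩

private lemma rank_three (a b : Fin 3 → ℝ) (c : ℝ) (ha : a ≠ 0)
    (hab : ¬ ∃ μ : ℝ, b = μ • a) :
    (Matrix.fromRows (hat a) (c • (hat a * hat a) + hat b)).rank = 3 := by
  have hba : b ⨯₃ a ≠ 0 := by
    intro h0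
    obtain ⟨d, hd⟩ := cross_zero_imp b a (fun hb => hab ⟨0, by simp [hb]⟩) h0
    have hd0 : d ≠ 0 := fun h => ha (by simp [hd, h])
    exact hab ⟨d⁻¹, by rw [hd, smul_smul, inv_mul_cancel₀ hd0, one_smul]⟩
  have hker : ∀ x, (Matrix.fromRows (hat a) (c • (hat a * hat a) + hat b)) *ᵥ x = 0 → x = 0 := by
    intro x hx
    rw [fromRows_mulVec] at hx
    have h1 : hat a *ᵥ x = 0 := funext fun p => congrFun hx (Sum.inl p)
    have h2 : (c • (hat a * hat a) + hat b) *ᵥ x = 0 := funext fun p => congrFun hx (Sum.inr p)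
    rw [add_mulVec, smul_mulVec, ← mulVec_mulVec, h1, mulVec_zero, smul_zero, zero_add,
      hat_mulVec] at h2
    rw [hat_mulVec] at h1
    obtain ⟨d, hd⟩ := cross_zero_imp a x ha h1
    rw [hd, LinearMap.map_smul] at h2
    rcases smul_eq_zero.mp h2 with h | h
    · simp [hd, h]
    · exact absurd h hba
  have hkerbot :
      LinearMap.ker (Matrix.fromRows (hat a) (c • (hat a * hat a) + hat b)).mulVecLin = ⊥ :=
    LinearMap.ker_eq_bot'.mpr fun x hx => hker x hx
  have := LinearMap.finrank_range_add_finrank_ker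
    (Matrix.fromRows (hat a) (c • (hat a * hat a) + hat b)).mulVecLin
  rw [hkerbot, finrank_bot] at this
  rw [Matrix.rank]
  simp [Module.finrank_fin_fun] at this ⊢
  omega

/-- If `i ≥ 2` is the first derivative order with `ω⁽ⁱ⁾(0) ≠ 0` and `j > i` is the first
order whose derivative is not parallel to `ω⁽ⁱ⁾(0)` (all intermediate ones being scalar
multiples of `ω⁽ⁱ⁾(0)`), then `Θ = [Ω⁽ⁱ⁻¹⁾(0); Ω⁽ʲ⁻¹⁾(0)]` has full column rank 3. -/
theorem theta_full_column_rank
    (ω : ℝ → Fin 3 → ℝ) (hω : ContDiff ℝ (⊤ : ℕ∞) ω) (i j : ℕ)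
    (hi2 : 2 ≤ i)
    (hzero : ∀ k, k < i → iteratedDeriv k ω 0 = 0)
    (hine : iteratedDeriv i ω 0 ≠ 0)
    (hij : i < j)
    (hpar : ∀ k, i < k → k < j → ∃ μ : ℝ, iteratedDeriv k ω 0 = μ • iteratedDeriv i ω 0)
    (hnpar : ¬ ∃ μ : ℝ, iteratedDeriv j ω 0 = μ • iteratedDeriv i ω 0) :
    (Matrix.fromRows (matIterDeriv (i - 1) (bigOmega ω) 0)
      (matIterDeriv (j - 1) (bigOmega ω) 0)).rank = 3 := by
  have hω' : ContDiff ℝ S∞ ω := hω.of_le (by simp)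
  set a := iteratedDeriv i ω 0 with ha_def
  set b := iteratedDeriv j ω 0 with hb_def
  -- first block
  have hblock1 : matIterDeriv (i - 1) (bigOmega ω) 0 = hat a := by
    rw [matITD_bigOmega hω']
    have hi1 : i - 1 + 1 = i := by omega
    have hsum : ∀ k ∈ Finset.range (i - 1 + 1), ((i-1).choose k : ℝ) •
        (hat (iteratedDeriv k ω 0) * hat (iteratedDeriv (i-1-k) ω 0)) = 0 := by
      intro k hk
      have hk' : k < i := by have := Finset.mem_range.mp hk; omega
      rw [hzero k hk', hat_zero, Matrix.zero_mul, smul_zero]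
    rw [Finset.sum_congr rfl hsum, Finset.sum_const_zero, zero_add, hi1]
  -- choose scalars
  have hch : ∀ k, ∃ c : ℝ, k < j → iteratedDeriv k ω 0 = c • a := by
    intro k
    rcases lt_trichotomy k i with h | h | h
    · exact ⟨0, fun _ => by rw [hzero k h, zero_smul]⟩
    · exact ⟨1, fun _ => by rw [h, one_smul]⟩
    · by_cases hkj : k < j
      · obtain ⟨μ, hμ⟩ := hpar k h hkj
        exact ⟨μ, fun _ => hμ⟩
      · exact ⟨0, fun hkj' => absurd hkj' hkj⟩
  choose μ hμ using hch
  -- second block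
  have hblock2 : matIterDeriv (j - 1) (bigOmega ω) 0 =
      (∑ k ∈ Finset.range (j - 1 + 1), ((j-1).choose k : ℝ) * (μ k * μ (j-1-k))) •
        (hat a * hat a) + hat b := by
    rw [matITD_bigOmega hω']
    have hj1 : j - 1 + 1 = j := by omega
    congr 1
    · rw [Finset.sum_smul]
      refine Finset.sum_congr rfl fun k hk => ?_
      have hk' : k < j := by have := Finset.mem_range.mp hk; omega
      have hk'' : j - 1 - k < j := by omega
      rw [hμ k hk', hμ (j-1-k) hk'', hat_smul, hat_smul]
      rw [Matrix.smul_mul, Matrix.mul_smul]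
      rw [smul_smul, smul_smul, mul_assoc]

    · rw [hj1]
  rw [hblock1, hblock2]
  exact rank_three a b _ hine hnpar
end

section
/- Let β : ℝ → ℝ³ satisfy β' = ⌊ω⌋ᵀ β for a smooth ω : ℝ → ℝ³, with |β(0)| ≠ 0. Suppose ⌊β⁽ᵏ⁾(0)⌋ β(0) = 0 for all k ≥ 0. Then ω⁽ᵏ⁾(0) is parallel to β(0) for all k ≥ 0. -/
open Matrix

theorem leibniz_bilin {E F G : Type*} [NormedAddCommGroup E] [NormedSpace ℝ E]
    [NormedAddCommGroup F] [NormedSpace ℝ F] [NormedAddCommGroup G] [NormedSpace ℝ G]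
    (B : E →L[ℝ] F →L[ℝ] G) {f : ℝ → E} {g : ℝ → F}
    (hf : ∀ n : ℕ, ContDiff ℝ n f) (hg : ∀ n : ℕ, ContDiff ℝ n g) (n : ℕ) :
    ∀ x, iteratedDeriv n (fun t => B (f t) (g t)) x =
      ∑ j ∈ Finset.range (n + 1),
        (n.choose j : ℝ) • B (iteratedDeriv j f x) (iteratedDeriv (n - j) g x) := by
  have hDf : ∀ (m : ℕ) (x : ℝ), HasDerivAt (iteratedDeriv m f) (iteratedDeriv (m + 1) f x) x := by
    intro m x
    have h1 : DifferentiableAt ℝ (iteratedDeriv m f) x :=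
      ((hf (m + 1)).differentiable_iteratedDeriv m (by exact_mod_cast m.lt_succ_self)) x
    simpa [iteratedDeriv_succ] using h1.hasDerivAt
  have hDg : ∀ (m : ℕ) (x : ℝ), HasDerivAt (iteratedDeriv m g) (iteratedDeriv (m + 1) g x) x := by
    intro m x
    have h1 : DifferentiableAt ℝ (iteratedDeriv m g) x :=
      ((hg (m + 1)).differentiable_iteratedDeriv m (by exact_mod_cast m.lt_succ_self)) x
    simpa [iteratedDeriv_succ] using h1.hasDerivAt
  induction n with
  | zero => intro x; simp
  | succ n IH =>
    intro x
    rw [iteratedDeriv_succ]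
    have hcongr : deriv (iteratedDeriv n fun t => B (f t) (g t)) x =
        deriv (fun y => ∑ j ∈ Finset.range (n + 1),
          (n.choose j : ℝ) • B (iteratedDeriv j f y) (iteratedDeriv (n - j) g y)) x := by
      congr 1
      ext y
      exact IH y
    have hterm : ∀ j, HasDerivAt
        (fun y => (n.choose j : ℝ) • B (iteratedDeriv j f y) (iteratedDeriv (n - j) g y))
        ((n.choose j : ℝ) • (B (iteratedDeriv (j + 1) f x) (iteratedDeriv (n - j) g x)
          + B (iteratedDeriv j f x) (iteratedDeriv (n - j + 1) g x))) x := by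
      intro j
      have h1 : HasDerivAt (fun y => B (iteratedDeriv j f y)) (B (iteratedDeriv (j + 1) f x)) x :=
        B.hasFDerivAt.comp_hasDerivAt x (hDf j x)
      exact (h1.clm_apply (hDg (n - j) x)).const_smul _
    have hsum := HasDerivAt.fun_sum (fun j (_ : j ∈ Finset.range (n + 1)) => hterm j)
    rw [hcongr, hsum.deriv]
    -- now the combinatorial identity
    set A : ℕ → ℕ → G := fun i j => B (iteratedDeriv i f x) (iteratedDeriv j g x) with hA
    show ∑ j ∈ Finset.range (n + 1), (n.choose j : ℝ) • (A (j + 1) (n - j) + A j (n - j + 1))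
      = ∑ j ∈ Finset.range (n + 1 + 1), ((n + 1).choose j : ℝ) • A j (n + 1 - j)
    have h2 : ∀ j ∈ Finset.range (n + 1),
        (n.choose j : ℝ) • A j (n - j + 1) = (n.choose j : ℝ) • A j (n + 1 - j) := by
      intro j hj
      rw [Nat.succ_sub (Nat.lt_succ_iff.mp (Finset.mem_range.mp hj))]
    have hR : ∑ j ∈ Finset.range (n + 2), ((n + 1).choose j : ℝ) • A j (n + 1 - j)
        = (∑ i ∈ Finset.range (n + 1), ((n + 1).choose (i + 1) : ℝ) • A (i + 1) (n + 1 - (i + 1)))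
          + ((n + 1).choose 0 : ℝ) • A 0 (n + 1) :=
      Finset.sum_range_succ' _ (n + 1)
    have hS : ∑ j ∈ Finset.range (n + 2), (n.choose j : ℝ) • A j (n + 1 - j)
        = (∑ i ∈ Finset.range (n + 1), (n.choose (i + 1) : ℝ) • A (i + 1) (n + 1 - (i + 1)))
          + (n.choose 0 : ℝ) • A 0 (n + 1) :=
      Finset.sum_range_succ' _ (n + 1)
    have hS2 : ∑ j ∈ Finset.range (n + 2), (n.choose j : ℝ) • A j (n + 1 - j)
        = ∑ j ∈ Finset.range (n + 1), (n.choose j : ℝ) • A j (n + 1 - j) := by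
      rw [Finset.sum_range_succ]
      simp [Nat.choose_succ_self]
    calc ∑ j ∈ Finset.range (n + 1), (n.choose j : ℝ) • (A (j + 1) (n - j) + A j (n - j + 1))
        = ∑ j ∈ Finset.range (n + 1), ((n.choose j : ℝ) • A (j + 1) (n - j)
            + (n.choose j : ℝ) • A j (n - j + 1)) := by simp [smul_add]
      _ = (∑ j ∈ Finset.range (n + 1), (n.choose j : ℝ) • A (j + 1) (n - j))
            + ∑ j ∈ Finset.range (n + 1), (n.choose j : ℝ) • A j (n - j + 1) :=
          Finset.sum_add_distrib
      _ = (∑ j ∈ Finset.range (n + 1), (n.choose j : ℝ) • A (j + 1) (n - j))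
            + ∑ j ∈ Finset.range (n + 1), (n.choose j : ℝ) • A j (n + 1 - j) := by
          rw [Finset.sum_congr rfl h2]
      _ = ∑ j ∈ Finset.range (n + 1 + 1), ((n + 1).choose j : ℝ) • A j (n + 1 - j) := by
          rw [hR, ← hS2, hS]
          simp only [Nat.choose_succ_succ, Nat.cast_add, add_smul, Nat.choose_zero_right,
            Nat.cast_one, one_smul, Finset.sum_add_distrib]
          have : ∀ i ∈ Finset.range (n + 1),
              (n.choose i : ℝ) • A (i + 1) (n + 1 - (i + 1)) = (n.choose i : ℝ) • A (i + 1) (n - i) := by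
            intro i _; rw [Nat.succ_sub_succ]
          rw [Finset.sum_congr rfl this]
          abel


/-- Cross product as a continuous bilinear map. -/
noncomputable def crossL : (Fin 3 → ℝ) →L[ℝ] (Fin 3 → ℝ) →L[ℝ] (Fin 3 → ℝ) :=
  LinearMap.toContinuousLinearMap
    ((LinearMap.toContinuousLinearMap.toLinearMap).comp crossProduct)

@[simp] lemma crossL_apply (u v : Fin 3 → ℝ) : crossL u v = crossProduct u v := rfl

/-- If `β' = ⌊ω⌋ᵀ β` with `β(0) ≠ 0` and `⌊β⁽ᵏ⁾(0)⌋ β(0) = 0` for all `k ≥ 0`,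
then `ω⁽ᵏ⁾(0)` is parallel to `β(0)` (their cross product vanishes) for all `k ≥ 0`. -/
theorem omega_derivs_parallel_beta
    (ω β : ℝ → Fin 3 → ℝ) (hω : ContDiff ℝ (⊤ : ℕ∞) ω) (hβ : Differentiable ℝ β)
    (hode : ∀ t, deriv β t = (hat (ω t))ᵀ *ᵥ β t)
    (h0 : β 0 ≠ 0)
    (hker : ∀ k : ℕ, hat (iteratedDeriv k β 0) *ᵥ β 0 = 0) :
    ∀ k : ℕ, crossProduct (iteratedDeriv k ω 0) (β 0) = 0 := by
  classical
  have hcross_hat : ∀ a v : Fin 3 → ℝ, hat a *ᵥ v = crossProduct a v := by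
    intro a v
    ext i
    fin_cases i <;>
      simp [hat, cross_apply, mulVec, dotProduct, Fin.sum_univ_three] <;> ring
  have hhatT : ∀ a v : Fin 3 → ℝ, (hat a)ᵀ *ᵥ v = crossProduct v a := by
    intro a v
    ext i
    fin_cases i <;>
      simp [hat, cross_apply, mulVec, dotProduct, Fin.sum_univ_three, Matrix.transpose_apply] <;>
        ring
  have hode' : ∀ t, deriv β t = crossL (β t) (ω t) := by
    intro t; rw [hode t, hhatT]; simp
  have hωn : ∀ n : ℕ, ContDiff ℝ n ω := fun n => hω.of_le (by exact_mod_cast le_top)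
  have hβn : ∀ n : ℕ, ContDiff ℝ n β := by
    intro n
    induction n with
    | zero => exact contDiff_zero.mpr hβ.continuous
    | succ n IH =>
      rw [show ((n + 1 : ℕ) : WithTop ℕ∞) = (n : WithTop ℕ∞) + 1 by push_cast; ring]
      rw [contDiff_succ_iff_deriv]
      refine ⟨hβ, ?_, ?_⟩
      · intro h
        exact absurd h (by simp)
      · rw [show deriv β = fun t => crossL (β t) (ω t) from funext hode']
        exact crossL.isBoundedBilinearMap.contDiff.comp (ContDiff.prodMk IH (hωn n))
  have hBder : ∀ k : ℕ, iteratedDeriv (k + 1) β 0 =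
      ∑ j ∈ Finset.range (k + 1),
        (k.choose j : ℝ) • crossProduct (iteratedDeriv j β 0) (iteratedDeriv (k - j) ω 0) := by
    intro k
    rw [iteratedDeriv_succ', show deriv β = fun t => crossL (β t) (ω t) from funext hode']
    simpa using leibniz_bilin crossL hβn hωn k 0
  have hkercross : ∀ k : ℕ, crossProduct (iteratedDeriv k β 0) (β 0) = 0 := by
    intro k; rw [← hcross_hat]; exact hker k
  have hpar : ∀ u : Fin 3 → ℝ, crossProduct u (β 0) = 0 → ∃ c : ℝ, u = c • β 0 := by
    intro u hu
    by_contra h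
    push_neg at h
    exact (crossProduct_ne_zero_iff_linearIndependent.mpr
      (linearIndependent_fin2.mpr ⟨h0, fun c hc => h c hc.symm⟩)) hu
  have hd : β 0 ⬝ᵥ β 0 ≠ 0 := fun h => h0 (dotProduct_self_eq_zero.mp h)
  intro k
  induction k using Nat.strong_induction_on with
  | _ k IH =>
    have hsum : crossProduct (∑ j ∈ Finset.range (k + 1),
        (k.choose j : ℝ) • crossProduct (iteratedDeriv j β 0) (iteratedDeriv (k - j) ω 0))
        (β 0) = 0 := by
      rw [← hBder k]; exact hkercross (k + 1)
    have expand : crossProduct (∑ j ∈ Finset.range (k + 1),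
        (k.choose j : ℝ) • crossProduct (iteratedDeriv j β 0) (iteratedDeriv (k - j) ω 0)) (β 0)
        = ∑ j ∈ Finset.range (k + 1), (k.choose j : ℝ) •
            crossProduct (crossProduct (iteratedDeriv j β 0) (iteratedDeriv (k - j) ω 0)) (β 0) := by
      simp [map_sum, _root_.map_smul, LinearMap.sum_apply, LinearMap.smul_apply]
    rw [expand] at hsum
    have hzero : ∀ j ∈ Finset.range (k + 1), j ≠ 0 →
        (k.choose j : ℝ) •
          crossProduct (crossProduct (iteratedDeriv j β 0) (iteratedDeriv (k - j) ω 0)) (β 0) = 0 := by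
      intro j hj hj0
      obtain ⟨b, hb⟩ := hpar _ (hkercross j)
      have hkj : k - j < k := Nat.sub_lt_self (Nat.pos_of_ne_zero hj0)
        (Nat.lt_succ_iff.mp (Finset.mem_range.mp hj))
      obtain ⟨c, hc⟩ := hpar _ (IH (k - j) hkj)
      rw [hb, hc]
      simp [_root_.map_smul, LinearMap.smul_apply, cross_self, smul_smul]
    rw [Finset.sum_eq_single_of_mem 0 (Finset.mem_range.mpr k.succ_pos) hzero] at hsum
    have hmain : crossProduct (crossProduct (β 0) (iteratedDeriv k ω 0)) (β 0) = 0 := by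
      simpa [iteratedDeriv_zero] using hsum
    -- Use u ×₃ v ×₃ w = u ×₃ (v ×₃ w) - v ×₃ (u ×₃ w)
    have htrip := cross_cross (β 0) (iteratedDeriv k ω 0) (β 0)
    rw [hmain, cross_self] at htrip
    -- htrip : 0 = β0 ×₃ (ωk ×₃ β0) - ωk ×₃ 0
    have hz : crossProduct (β 0) (crossProduct (iteratedDeriv k ω 0) (β 0)) = 0 := by
      have h := htrip.symm
      rw [map_zero, sub_zero] at h
      exact h
    set z := crossProduct (iteratedDeriv k ω 0) (β 0) with hzdef
    have hz' : crossProduct z (β 0) = 0 := by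
      rw [← cross_anticomm, hz, neg_zero]
    obtain ⟨c, hc⟩ := hpar z hz'
    have hdot : β 0 ⬝ᵥ z = 0 := dot_cross_self (iteratedDeriv k ω 0) (β 0)
    rw [hc] at hdot
    have hc0 : c = 0 := by
      rw [dotProduct_smul] at hdot
      rcases mul_eq_zero.mp hdot with h | h
      · exact h
      · exact absurd h hd
    rw [hc, hc0, zero_smul]
end
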